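/- arXiv:2006.04346 — 5 statements merged into one kernel-verified Lean document; each statement's English description precedes it below -/
import Mathlib

section
/- Let γ : ℝ → ℝ be C³ with γ(0) = γ'(0) = 0, γ'' > 0 on (0,∞), lim_{t→0⁺} γ'(t)/γ''(t) = 0, and C₁ ≤ (γ'/γ'')'(t) ≤ C₂ on (0,∞) with 0 < C₁ ≤ C₂. Then for every t ∈ (0,∞), 1/(2C₂) ≤ t·γ''(t)/γ'(t) ≤ 2/C₁. -/
/-!
Put `g = γ'/γ''`. Since `g(0⁺) = 0` and `C₁ ≤ g' ≤ C₂` on `(0, ∞)`, the functions `g(t) - C₁ t` and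
`C₂ t - g(t)` are monotone there with limit `0` at `0⁺`, hence `C₁ t ≤ g(t) ≤ C₂ t`. As
`t γ''(t) / γ'(t) = t / g(t)`, this gives the sharper bounds `1/C₂ ≤ t γ''(t) / γ'(t) ≤ 1/C₁`.
-/

open Set Filter Topology

lemma MonotoneOn.le_of_tendsto_nhdsGT {f : ℝ → ℝ} {a L t : ℝ} (hf : MonotoneOn f (Ioi a))
    (hlim : Tendsto f (𝓝[>] a) (𝓝 L)) (ht : a < t) : L ≤ f t := by
  refine le_of_tendsto hlim ?_
  filter_upwards [Ioo_mem_nhdsGT ht] with s hs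
  exact hf hs.1 ht hs.2.le

lemma mul_le_of_le_deriv_of_tendsto_nhdsGT_zero {f : ℝ → ℝ} {c t : ℝ}
    (hf : Tendsto f (𝓝[>] 0) (𝓝 0)) (hd : ∀ s ∈ Ioi (0 : ℝ), DifferentiableAt ℝ f s)
    (hc : ∀ s ∈ Ioi (0 : ℝ), c ≤ deriv f s) (ht : 0 < t) : c * t ≤ f t := by
  have hmono : MonotoneOn (fun s => f s - c * s) (Ioi 0) := by
    have hderiv : ∀ s ∈ Ioi (0 : ℝ), HasDerivAt (fun s => f s - c * s) (deriv f s - c) s :=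
      fun s hs => (hd s hs).hasDerivAt.fun_sub (hasDerivAt_const_mul c)
    refine monotoneOn_of_deriv_nonneg (convex_Ioi 0)
      (fun s hs => (hderiv s hs).continuousAt.continuousWithinAt) ?_ ?_
    · rw [interior_Ioi]
      exact fun s hs => (hderiv s hs).differentiableAt.differentiableWithinAt
    · rw [interior_Ioi]
      intro s hs
      rw [(hderiv s hs).deriv]
      linarith [hc s hs]
  have hlim : Tendsto (fun s => f s - c * s) (𝓝[>] 0) (𝓝 0) := by
    simpa using hf.sub ((continuous_const.mul continuous_id).tendsto' 0 (c * 0) rfl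
      |>.mono_left nhdsWithin_le_nhds)
  linarith [hmono.le_of_tendsto_nhdsGT hlim ht]

lemma le_mul_of_deriv_le_of_tendsto_nhdsGT_zero {f : ℝ → ℝ} {c t : ℝ}
    (hf : Tendsto f (𝓝[>] 0) (𝓝 0)) (hd : ∀ s ∈ Ioi (0 : ℝ), DifferentiableAt ℝ f s)
    (hc : ∀ s ∈ Ioi (0 : ℝ), deriv f s ≤ c) (ht : 0 < t) : f t ≤ c * t := by
  have := mul_le_of_le_deriv_of_tendsto_nhdsGT_zero (f := fun s => -f s) (c := -c)
    (by simpa using hf.neg) (fun s hs => (hd s hs).neg)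
    (fun s hs => by simpa [deriv.fun_neg] using hc s hs) ht
  linarith

lemma one_div_le_div_and_div_le_one_div {x t c₁ c₂ : ℝ} (ht : 0 < t) (hc₁ : 0 < c₁)
    (hlow : c₁ * t ≤ x) (hup : x ≤ c₂ * t) : 1 / c₂ ≤ t / x ∧ t / x ≤ 1 / c₁ := by
  have hx : 0 < x := (mul_pos hc₁ ht).trans_le hlow
  have hc₂ : 0 < c₂ := pos_of_mul_pos_left (hx.trans_le hup) ht.le
  constructor
  · rw [div_le_div_iff₀ hc₂ hx]
    linarith
  · rw [div_le_div_iff₀ hx hc₁]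
    linarith

theorem stmt1_general (γ : ℝ → ℝ) (C₁ C₂ : ℝ)
    (hlim : Tendsto (fun t => deriv γ t / deriv (deriv γ) t)
      (nhdsWithin 0 (Ioi 0)) (nhds 0))
    (hC₁ : 0 < C₁)
    (hbound : ∀ t ∈ Ioi (0:ℝ),
      C₁ ≤ deriv (fun s => deriv γ s / deriv (deriv γ) s) t ∧
      deriv (fun s => deriv γ s / deriv (deriv γ) s) t ≤ C₂) :
    ∀ t ∈ Ioi (0:ℝ),
      1 / (2 * C₂) ≤ t * deriv (deriv γ) t / deriv γ t ∧
      t * deriv (deriv γ) t / deriv γ t ≤ 2 / C₁ := by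
  intro t ht
  set g : ℝ → ℝ := fun s => deriv γ s / deriv (deriv γ) s
  -- `deriv g s ≥ C₁ > 0` cannot be the junk value `0`, so `g` is differentiable there.
  have hd : ∀ s ∈ Ioi (0 : ℝ), DifferentiableAt ℝ g s :=
    fun s hs => differentiableAt_of_deriv_ne_zero (hC₁.trans_le (hbound s hs).1).ne'
  have hratio : t * deriv (deriv γ) t / deriv γ t = t / g t := (div_div_eq_mul_div _ _ _).symm
  obtain ⟨hlow, hup⟩ := one_div_le_div_and_div_le_one_div ht hC₁
    (mul_le_of_le_deriv_of_tendsto_nhdsGT_zero hlim hd (fun s hs => (hbound s hs).1) ht)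
    (le_mul_of_deriv_le_of_tendsto_nhdsGT_zero hlim hd (fun s hs => (hbound s hs).2) ht)
  have hC₂ : 0 < C₂ := hC₁.trans_le (hbound t ht).1 |>.trans_le (hbound t ht).2
  rw [hratio]
  constructor
  · exact le_trans (one_div_le_one_div_of_le hC₂ (by linarith)) hlow
  · exact hup.trans (div_le_div_of_nonneg_right (by norm_num) hC₁.le)

theorem stmt1 (γ : ℝ → ℝ) (C₁ C₂ : ℝ)
    (hγ : ContDiff ℝ 3 γ)
    (h0 : γ 0 = 0) (h0' : deriv γ 0 = 0)
    (hpos : ∀ t ∈ Ioi (0:ℝ), 0 < deriv (deriv γ) t)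
    (hlim : Tendsto (fun t => deriv γ t / deriv (deriv γ) t)
      (nhdsWithin 0 (Ioi 0)) (nhds 0))
    (hC₁ : 0 < C₁) (hC₁₂ : C₁ ≤ C₂)
    (hbound : ∀ t ∈ Ioi (0:ℝ),
      C₁ ≤ deriv (fun s => deriv γ s / deriv (deriv γ) s) t ∧
      deriv (fun s => deriv γ s / deriv (deriv γ) s) t ≤ C₂) :
    ∀ t ∈ Ioi (0:ℝ),
      1 / (2 * C₂) ≤ t * deriv (deriv γ) t / deriv γ t ∧
      t * deriv (deriv γ) t / deriv γ t ≤ 2 / C₁ :=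
  stmt1_general γ C₁ C₂ hlim hC₁ hbound
end

section
/- Let I ⊂ ℝ be an interval, k ∈ ℕ with k ≥ 1, f ∈ C^k(I), and suppose |f^{(k)}(x)| ≥ σ for all x ∈ I, where σ > 0. Then there exists a constant C depending only on k such that for all ρ > 0, the Lebesgue measure of {x ∈ I : |f(x)| ≤ ρ} is at most C (ρ/σ)^{1/k}. -/
/-!
Let `E = {x ∈ I | |f x| ≤ ρ}` have measure `r`. Taking one point of `E` in every other cell of a
grid of mesh `δ = r / (2k)` gives `k + 1` points of `E` pairwise at distance `≥ δ`, so the `k`-th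
divided difference of `f` at these points is at most `(k + 1) ρ / δ ^ k` in absolute value. By
the mean value theorem for divided differences (Rolle applied `k` times to `f` minus its Lagrange
interpolant) it also equals `f⁽ᵏ⁾(ξ) / k!` for some `ξ ∈ I`, hence is at least `σ / k!`. Thus
`δ ^ k ≤ k! (k + 1) ρ / σ`.
-/

open Set MeasureTheory Polynomial

def dividedDiff {F : Type*} [Field F] {n : ℕ} (g : F → F) (y : Fin (n + 1) → F) : F :=
  ∑ i, g (y i) / ∏ j ∈ Finset.univ.erase i, (y i - y j)

theorem Polynomial.eval_iterate_derivative_eq_factorial_mul_dividedDiff {F : Type*} [Field F]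
    {n : ℕ} {p : F[X]} (hp : p.degree < ↑(n + 1)) {y : Fin (n + 1) → F}
    (hy : Function.Injective y) (x : F) :
    (derivative^[n] p).eval x = n.factorial * dividedDiff (fun t => p.eval t) y := by
  have hdeg : p.degree < (Finset.univ : Finset (Fin (n + 1))).card := by
    rwa [Finset.card_univ, Fintype.card_fin]
  rw [Lagrange.eval_iterate_derivative_eq_sum hy.injOn hdeg (by simp)]
  simp [dividedDiff]

theorem Polynomial.iteratedDeriv_eval (p : ℝ[X]) (n : ℕ) :
    iteratedDeriv n (fun x => p.eval x) = fun x => (derivative^[n] p).eval x := by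
  induction n with
  | zero => simp
  | succ n ih =>
    rw [iteratedDeriv_succ, ih, Function.iterate_succ_apply']
    funext x
    exact Polynomial.deriv _

theorem exists_strictMono_deriv_eq_zero {n : ℕ} {g : ℝ → ℝ} {y : Fin (n + 2) → ℝ}
    (hy : StrictMono y) (hg : ContinuousOn g (Icc (y 0) (y (Fin.last _))))
    (hzero : ∀ i, g (y i) = 0) :
    ∃ z : Fin (n + 1) → ℝ, StrictMono z ∧
      Icc (z 0) (z (Fin.last _)) ⊆ Ioo (y 0) (y (Fin.last _)) ∧ ∀ i, deriv g (z i) = 0 := by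
  have hrolle (i : Fin (n + 1)) : ∃ c ∈ Ioo (y i.castSucc) (y i.succ), deriv g c = 0 :=
    exists_deriv_eq_zero (hy i.castSucc_lt_succ)
      (hg.mono (Icc_subset_Icc (hy.monotone (Fin.zero_le _)) (hy.monotone (Fin.le_last _))))
      (by rw [hzero, hzero])
  choose z hz hz0 using hrolle
  refine ⟨z, Fin.strictMono_iff_lt_succ.mpr fun i => (hz i.castSucc).2.trans (hz i.succ).1,
    Icc_subset_Ioo ?_ ?_, hz0⟩
  · simpa using (hz 0).1
  · simpa using (hz (Fin.last _)).2

theorem exists_iteratedDeriv_eq_zero {n : ℕ} {g : ℝ → ℝ} {y : Fin (n + 2) → ℝ}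
    (hy : StrictMono y) (hg : ContDiffOn ℝ (n + 1 : ℕ) g (Icc (y 0) (y (Fin.last _))))
    (hzero : ∀ i, g (y i) = 0) :
    ∃ ξ ∈ Ioo (y 0) (y (Fin.last _)), iteratedDeriv (n + 1) g ξ = 0 := by
  obtain ⟨z, hz, hzy, hz0⟩ := exists_strictMono_deriv_eq_zero hy hg.continuousOn hzero
  rw [iteratedDeriv_succ']
  cases n with
  | zero => exact ⟨z 0, hzy (left_mem_Icc.2 le_rfl), by simpa using hz0 0⟩
  | succ n =>
    have hg' : ContDiffOn ℝ (n + 1 : ℕ) (deriv g) (Ioo (y 0) (y (Fin.last _))) :=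
      (hg.mono Ioo_subset_Icc_self).deriv_of_isOpen isOpen_Ioo (by norm_cast)
    obtain ⟨ξ, hξ, hξ0⟩ := exists_iteratedDeriv_eq_zero hz (hg'.mono hzy) hz0
    exact ⟨ξ, hzy (Ioo_subset_Icc_self hξ), hξ0⟩

theorem exists_iteratedDeriv_eq_factorial_mul_dividedDiff {n : ℕ} {f : ℝ → ℝ}
    {y : Fin (n + 2) → ℝ} (hy : StrictMono y)
    (hf : ContDiffOn ℝ (n + 1 : ℕ) f (Icc (y 0) (y (Fin.last _)))) :
    ∃ ξ ∈ Ioo (y 0) (y (Fin.last _)),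
      iteratedDeriv (n + 1) f ξ = (n + 1).factorial * dividedDiff f y := by
  set p := Lagrange.interpolate Finset.univ y (fun i => f (y i))
  have hp_node (i : Fin (n + 2)) : p.eval (y i) = f (y i) :=
    Lagrange.eval_interpolate_at_node _ hy.injective.injOn (Finset.mem_univ i)
  have hp_deg : p.degree < ↑(n + 2) := by
    have := Lagrange.degree_interpolate_lt (s := Finset.univ) (fun i => f (y i)) hy.injective.injOn
    rwa [Finset.card_univ, Fintype.card_fin] at this
  have hp_smooth : ContDiff ℝ (n + 1 : ℕ) (fun x => p.eval x) := by
    simpa using p.contDiff_aeval (𝕜 := ℝ) _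
  obtain ⟨ξ, hξ, hξ0⟩ := exists_iteratedDeriv_eq_zero hy
    (hf.sub hp_smooth.contDiffOn) (fun i => by simp [hp_node])
  refine ⟨ξ, hξ, ?_⟩
  have hfξ : ContDiffAt ℝ (n + 1 : ℕ) f ξ := hf.contDiffAt (Icc_mem_nhds hξ.1 hξ.2)
  rw [iteratedDeriv_fun_sub hfξ hp_smooth.contDiffAt, Polynomial.iteratedDeriv_eval,
    sub_eq_zero] at hξ0
  beta_reduce at hξ0
  rw [hξ0, eval_iterate_derivative_eq_factorial_mul_dividedDiff hp_deg hy.injective]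
  simp [dividedDiff, hp_node]

theorem abs_dividedDiff_le {n : ℕ} {g : ℝ → ℝ} {y : Fin (n + 1) → ℝ} {δ ρ : ℝ} (hδ : 0 < δ)
    (hsep : Pairwise fun i j => δ ≤ |y i - y j|) (hg : ∀ i, |g (y i)| ≤ ρ) :
    |dividedDiff g y| * δ ^ n ≤ (n + 1) * ρ := by
  rw [← le_div_iff₀ (by positivity)]
  have hterm (i : Fin (n + 1)) :
      |g (y i) / ∏ j ∈ Finset.univ.erase i, (y i - y j)| ≤ ρ / δ ^ n := by
    have hprod : δ ^ n ≤ ∏ j ∈ Finset.univ.erase i, |y i - y j| :=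
      calc δ ^ n = ∏ _j ∈ Finset.univ.erase i, δ := by simp [Finset.card_erase_of_mem]
        _ ≤ _ := Finset.prod_le_prod (fun _ _ => hδ.le)
          fun j hj => hsep (Finset.ne_of_mem_erase hj).symm
    rw [abs_div, Finset.abs_prod]
    exact div_le_div₀ ((abs_nonneg _).trans (hg i)) (hg i) (by positivity) hprod
  calc |dividedDiff g y|
      ≤ ∑ i, |g (y i) / ∏ j ∈ Finset.univ.erase i, (y i - y j)| :=
        Finset.abs_sum_le_sum_abs _ _
    _ ≤ ∑ _i : Fin (n + 1), ρ / δ ^ n := Finset.sum_le_sum fun i _ => hterm i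
    _ = (n + 1) * ρ / δ ^ n := by simp [mul_div_assoc]

theorem exists_finset_inter_Ico_nonempty_of_lt_volume (E : Set ℝ) (N : ℕ) {δ : ℝ} (hδ : 0 < δ)
    (hE : ENNReal.ofReal (N * δ) < volume E) :
    ∃ s : Finset ℤ, s.card = N + 1 ∧ ∀ m ∈ s, (E ∩ Ico (m * δ) ((m + 1) * δ)).Nonempty := by
  set cell : ℤ → Set ℝ := fun m => Ico (m * δ) ((m + 1) * δ)
  set J := {m : ℤ | (E ∩ cell m).Nonempty}
  have hcover : E ⊆ ⋃ m ∈ J, cell m := by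
    intro x hx
    have hcell : x ∈ cell ⌊x / δ⌋ :=
      ⟨(le_div_iff₀ hδ).mp (Int.floor_le _), (div_lt_iff₀ hδ).mp (Int.lt_floor_add_one _)⟩
    exact mem_biUnion ⟨x, hx, hcell⟩ hcell
  by_contra hno
  have hJ : J.Finite := by
    by_contra hJ
    obtain ⟨s, hsJ, hs⟩ := Set.not_finite.mp hJ |>.exists_subset_card_eq (N + 1)
    exact hno ⟨s, hs, fun m hm => hsJ hm⟩
  have hcard : hJ.toFinset.card ≤ N := by
    by_contra! hcard
    obtain ⟨s, hsJ, hs⟩ := Finset.exists_subset_card_eq (Nat.succ_le_of_lt hcard)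
    exact hno ⟨s, hs, fun m hm => hJ.mem_toFinset.mp (hsJ hm)⟩
  refine hE.not_ge ?_
  calc volume E ≤ volume (⋃ m ∈ hJ.toFinset, cell m) := measure_mono (by simpa using hcover)
    _ ≤ ∑ m ∈ hJ.toFinset, volume (cell m) := measure_biUnion_finset_le _ _
    _ = hJ.toFinset.card * ENNReal.ofReal δ := by simp [cell, Real.volume_Ico, add_mul]
    _ ≤ ENNReal.ofReal (N * δ) := by
      rw [ENNReal.ofReal_mul (by positivity), ENNReal.ofReal_natCast]
      gcongr

theorem exists_separated_points_of_lt_volume (E : Set ℝ) (n : ℕ) {δ : ℝ} (hδ : 0 < δ)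
    (hE : ENNReal.ofReal (2 * n * δ) < volume E) :
    ∃ y : Fin (n + 1) → ℝ, (∀ i, y i ∈ E) ∧ StrictMono y ∧
      Pairwise fun i j => δ ≤ |y i - y j| := by
  obtain ⟨s, hs, hsE⟩ := exists_finset_inter_Ico_nonempty_of_lt_volume E (2 * n) hδ
    (by push_cast; exact hE)
  choose! pt hpt using hsE
  set e := s.orderEmbOfFin hs
  set cellIdx : Fin (n + 1) → ℤ := fun i => e ⟨2 * i, by omega⟩
  set y : Fin (n + 1) → ℝ := fun i => pt (cellIdx i)
  have hcellIdx (i : Fin (n + 1)) : cellIdx i ∈ s := s.orderEmbOfFin_mem hs _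
  -- we use every other cell, so that distinct points lie in non-adjacent cells
  have hgap (i j : Fin (n + 1)) (hij : i < j) : y i + δ ≤ y j := by
    have h1 : cellIdx i < e ⟨2 * i + 1, by omega⟩ := e.strictMono (by simp)
    have h2 : e ⟨2 * i + 1, by omega⟩ < cellIdx j :=
      e.strictMono (Fin.mk_lt_mk.mpr (by have : (i : ℕ) < j := hij; omega))
    have hcells : (cellIdx i + 2 : ℝ) ≤ cellIdx j := by exact_mod_cast (by omega)
    have hi := (hpt _ (hcellIdx i)).2
    have hj := (hpt _ (hcellIdx j)).2
    simp only [mem_Ico] at hi hj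
    nlinarith
  refine ⟨y, fun i => (hpt _ (hcellIdx i)).1, fun i j hij => by linarith [hgap i j hij],
    fun i j hij => ?_⟩
  rcases hij.lt_or_gt with h | h
  · rw [abs_sub_comm]
    exact le_abs.mpr (Or.inl (by linarith [hgap i j h]))
  · exact le_abs.mpr (Or.inl (by linarith [hgap j i h]))

theorem mul_pow_le_of_separated_nodes {n : ℕ} {I : Set ℝ} (hI : I.OrdConnected) {f : ℝ → ℝ}
    (hf : ContDiffOn ℝ (n + 1 : ℕ) f I) {σ ρ δ : ℝ}
    (hder : ∀ x ∈ I, σ ≤ |iteratedDerivWithin (n + 1) f I x|) {y : Fin (n + 2) → ℝ}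
    (hy : StrictMono y) (hδ : 0 < δ) (hsep : Pairwise fun i j => δ ≤ |y i - y j|)
    (hyI : ∀ i, y i ∈ I) (hfy : ∀ i, |f (y i)| ≤ ρ) :
    σ * δ ^ (n + 1) ≤ (n + 1).factorial * (n + 2) * ρ := by
  have hIcc : Icc (y 0) (y (Fin.last _)) ⊆ I := hI.out (hyI 0) (hyI _)
  obtain ⟨ξ, hξ, hξf⟩ := exists_iteratedDeriv_eq_factorial_mul_dividedDiff hy (hf.mono hIcc)
  have hξI : iteratedDerivWithin (n + 1) f I ξ = iteratedDeriv (n + 1) f ξ :=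
    iteratedDerivWithin_eq_iteratedDeriv
      (uniqueDiffOn_convex hI.convex ⟨ξ, interior_mono hIcc (by simpa using hξ)⟩)
      (hf.contDiffAt (Filter.mem_of_superset (Icc_mem_nhds hξ.1 hξ.2) hIcc))
      (hIcc (Ioo_subset_Icc_self hξ))
  calc σ * δ ^ (n + 1) ≤ |iteratedDerivWithin (n + 1) f I ξ| * δ ^ (n + 1) := by
        gcongr
        exact hder ξ (hIcc (Ioo_subset_Icc_self hξ))
    _ = (n + 1).factorial * (|dividedDiff f y| * δ ^ (n + 1)) := by
        rw [hξI, hξf, abs_mul, Nat.abs_cast, mul_assoc]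
    _ ≤ (n + 1).factorial * ((↑(n + 1) + 1) * ρ) :=
        mul_le_mul_of_nonneg_left (abs_dividedDiff_le hδ hsep hfy) (by positivity)
    _ = (n + 1).factorial * (n + 2) * ρ := by push_cast; ring

theorem stmt6 (k : ℕ) (hk : 1 ≤ k) :
    ∃ C > (0:ℝ), ∀ (I : Set ℝ), I.OrdConnected →
      ∀ f : ℝ → ℝ, ContDiffOn ℝ k f I →
      ∀ σ > (0:ℝ), (∀ x ∈ I, σ ≤ |iteratedDerivWithin k f I x|) →
      ∀ ρ > (0:ℝ),
        volume {x ∈ I | |f x| ≤ ρ} ≤ ENNReal.ofReal (C * (ρ / σ) ^ ((1:ℝ) / k)) := by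
  obtain ⟨n, rfl⟩ := Nat.exists_eq_add_of_le' hk
  set A : ℝ := (n + 1).factorial * (n + 2)
  refine ⟨2 * (n + 1) * A ^ ((1 : ℝ) / ↑(n + 1)), by positivity, ?_⟩
  intro I hI f hf σ hσ hder ρ hρ
  by_contra! hlt
  obtain ⟨r, -, hCr, hr⟩ := ENNReal.lt_iff_exists_real_btwn.mp hlt
  obtain ⟨hCr, hr0⟩ := ENNReal.ofReal_lt_ofReal_iff'.mp hCr
  set δ := r / (2 * (n + 1))
  have hδ : 0 < δ := by positivity
  obtain ⟨y, hyE, hy, hsep⟩ := exists_separated_points_of_lt_volume _ (n + 1) hδ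
    (by convert hr using 2; simp only [δ]; push_cast; field_simp)
  have hδA : σ * δ ^ (n + 1) ≤ A * ρ := mul_pow_le_of_separated_nodes hI hf hder hy hδ hsep
    (fun i => (hyE i).1) (fun i => (hyE i).2)
  have hδt : δ ≤ A ^ ((1 : ℝ) / ↑(n + 1)) * (ρ / σ) ^ ((1 : ℝ) / ↑(n + 1)) := by
    rw [← Real.mul_rpow (by positivity) (by positivity), one_div,
      Real.le_rpow_inv_iff_of_pos hδ.le (by positivity) (by positivity), Real.rpow_natCast,
      ← mul_div_assoc, le_div_iff₀ hσ, mul_comm]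
    exact hδA
  have : r ≤ 2 * (n + 1) * A ^ ((1 : ℝ) / ↑(n + 1)) * (ρ / σ) ^ ((1 : ℝ) / ↑(n + 1)) :=
    calc r = 2 * (n + 1) * δ := by simp only [δ]; field_simp
      _ ≤ _ := by rw [mul_assoc _ (A ^ _)]; gcongr
  linarith
end

section
/- Let φ : ℝ → ℝ be supported in {t : 1/2 ≤ |t| ≤ 2} with 0 ≤ φ ≤ 1, and let γ satisfy γ(t)/t strictly increasing on (0,∞), 1 + 1/(2C₂) ≤ tγ'(t)/γ(t) ≤ 1 + 2/C₁, and 2^{1+1/(4C₂)} ≤ γ(2t)/γ(t) on (0,∞), where 0 < C₁ ≤ C₂. Then there is a constant C depending only on C₁, C₂ such that for all n ∈ ℤ with n ≤ 0 and all k ∈ ℤ, the sum over j ∈ ℤ of φ(γ'(2^{-j})/2^{n+j−k}) is at most C. -/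
/-!
Since `γ'' > 0`, `γ'` is increasing on `(0, ∞)`, so the quantity `x j = γ'(2^{-j}) / 2^{n+j-k}`
at least halves when `j` increases by one. The support condition
on `φ` confines `x j` to `[1/2, 2]`, an interval of ratio `4`, so the contributing indices lie
within distance `2` of each other, and each contributes at most `1`.
-/

open Set

theorem two_pow_mul_le_of_halving {x : ℤ → ℝ} (hx : ∀ j, 2 * x (j + 1) ≤ x j) (i : ℤ) (d : ℕ) :
    2 ^ d * x (i + d) ≤ x i := by
  induction d with
  | zero => simp
  | succ d ih =>
    calc 2 ^ (d + 1) * x (i + (d + 1 : ℕ))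
        = 2 ^ d * (2 * x (i + d + 1)) := by push_cast; ring_nf
      _ ≤ 2 ^ d * x (i + d) := by gcongr; exact hx _
      _ ≤ x i := ih

theorem le_add_two_of_halving {x : ℤ → ℝ} (hx : ∀ j, 2 * x (j + 1) ≤ x j) {i j : ℤ}
    (hi : x i ≤ 2) (hj : 1 / 2 ≤ x j) : j ≤ i + 2 := by
  by_contra! hij
  obtain ⟨d, rfl⟩ : ∃ d : ℕ, j = i + d := ⟨(j - i).toNat, by omega⟩
  have hd : (2 : ℝ) ^ 3 ≤ 2 ^ d := pow_le_pow_right₀ one_le_two (by omega)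
  have := two_pow_mul_le_of_halving hx i d
  nlinarith

theorem tsum_le_card_of_support_subset {α : Type*} {f : α → ℝ} (s : Finset α)
    (hs : Function.support f ⊆ s) (hf : ∀ a, f a ≤ 1) : ∑' a, f a ≤ s.card := by
  rw [tsum_eq_sum fun a ha => Function.notMem_support.mp fun h => ha (hs h)]
  simpa using Finset.sum_le_card_nsmul s f 1 fun a _ => hf a

theorem tsum_le_of_support_close {f : ℤ → ℝ} (r : ℕ) (hf : ∀ j, f j ≤ 1)
    (hclose : ∀ i ∈ Function.support f, ∀ j ∈ Function.support f, j ≤ i + r) :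
    ∑' j, f j ≤ 2 * r + 1 := by
  rcases (Function.support f).eq_empty_or_nonempty with hempty | ⟨j₀, hj₀⟩
  · rw [Function.support_eq_empty_iff.mp hempty]
    simp only [Pi.zero_apply, tsum_zero]
    positivity
  · have hs : Function.support f ⊆ Finset.Icc (j₀ - r) (j₀ + r) := fun j hj => by
      have := hclose j hj j₀ hj₀
      have := hclose j₀ hj₀ j hj
      simp only [Finset.coe_Icc, mem_Icc]
      omega
    have hcard : (Finset.Icc (j₀ - r) (j₀ + r)).card = 2 * r + 1 := by
      rw [Int.card_Icc]; omega
    simpa [hcard] using tsum_le_card_of_support_subset _ hs hf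

theorem two_mul_le_of_monotoneOn {f : ℝ → ℝ} (hf : MonotoneOn f (Ioi 0)) (n k j : ℤ) :
    2 * (f (2 ^ (-(j + 1))) / 2 ^ (n + (j + 1) - k)) ≤ f (2 ^ (-j)) / 2 ^ (n + j - k) := by
  have hpow : (2 : ℝ) ^ (n + (j + 1) - k) = 2 * 2 ^ (n + j - k) := by
    rw [show n + (j + 1) - k = n + j - k + 1 by ring, zpow_add_one₀ two_ne_zero, mul_comm]
  have hle : f (2 ^ (-(j + 1))) ≤ f (2 ^ (-j)) :=
    hf (mem_Ioi.mpr (zpow_pos two_pos _)) (mem_Ioi.mpr (zpow_pos two_pos _)) (zpow_le_zpow_right₀ one_le_two (by omega))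
  rw [hpow, ← mul_div_assoc, mul_div_mul_left _ _ two_ne_zero]
  gcongr

theorem stmt8_general (C₁ C₂ : ℝ) :
    ∃ C > (0:ℝ), ∀ (φ γ : ℝ → ℝ),
      (∀ t, φ t ≠ 0 → 1/2 ≤ |t| ∧ |t| ≤ 2) →
      (∀ t, 0 ≤ φ t ∧ φ t ≤ 1) →
      ContDiff ℝ 3 γ → γ 0 = 0 → deriv γ 0 = 0 →
      (∀ t ∈ Ioi (0:ℝ), 0 < deriv γ t) →
      (∀ t ∈ Ioi (0:ℝ), 0 < deriv (deriv γ) t) →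
      StrictMonoOn (fun t => γ t / t) (Ioi 0) →
      (∀ t ∈ Ioi (0:ℝ),
        1 + 1 / (2 * C₂) ≤ t * deriv γ t / γ t ∧
        t * deriv γ t / γ t ≤ 1 + 2 / C₁) →
      (∀ t ∈ Ioi (0:ℝ), (2:ℝ) ^ (1 + 1 / (4 * C₂)) ≤ γ (2 * t) / γ t) →
      ∀ n : ℤ, n ≤ 0 → ∀ k : ℤ,
        ∑' j : ℤ, φ (deriv γ ((2:ℝ) ^ (-j)) / (2:ℝ) ^ (n + j - k)) ≤ C := by
  refine ⟨5, by norm_num, ?_⟩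
  intro φ γ hφ_supp hφ_bound hγ _ _ hγ' hγ'' _ _ _ n _ k
  set x : ℤ → ℝ := fun j => deriv γ ((2:ℝ) ^ (-j)) / (2:ℝ) ^ (n + j - k)
  have hγ'_mono : MonotoneOn (deriv γ) (Ioi 0) :=
    (strictMonoOn_of_deriv_pos (convex_Ioi 0) (hγ.continuous_deriv (by norm_num)).continuousOn
      (by simpa using hγ'')).monotoneOn
  have hx_halving : ∀ j, 2 * x (j + 1) ≤ x j := two_mul_le_of_monotoneOn hγ'_mono n k
  have hx_mem : ∀ j ∈ Function.support (fun j => φ (x j)), 1 / 2 ≤ x j ∧ x j ≤ 2 := by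
    intro j hj
    have hx_nonneg : 0 ≤ x j := div_nonneg (hγ' _ (mem_Ioi.mpr (zpow_pos two_pos _))).le (zpow_pos two_pos _).le
    simpa [abs_of_nonneg hx_nonneg] using hφ_supp _ hj
  refine (tsum_le_of_support_close 2 (fun j => (hφ_bound (x j)).2)
    fun i hi j hj => le_add_two_of_halving hx_halving (hx_mem i hi).2 (hx_mem j hj).1).trans ?_
  norm_num

theorem stmt8 (C₁ C₂ : ℝ) (hC₁ : 0 < C₁) (hC₁₂ : C₁ ≤ C₂) :
    ∃ C > (0:ℝ), ∀ (φ γ : ℝ → ℝ),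
      (∀ t, φ t ≠ 0 → 1/2 ≤ |t| ∧ |t| ≤ 2) →
      (∀ t, 0 ≤ φ t ∧ φ t ≤ 1) →
      ContDiff ℝ 3 γ → γ 0 = 0 → deriv γ 0 = 0 →
      (∀ t ∈ Ioi (0:ℝ), 0 < deriv γ t) →
      (∀ t ∈ Ioi (0:ℝ), 0 < deriv (deriv γ) t) →
      StrictMonoOn (fun t => γ t / t) (Ioi 0) →
      (∀ t ∈ Ioi (0:ℝ),
        1 + 1 / (2 * C₂) ≤ t * deriv γ t / γ t ∧
        t * deriv γ t / γ t ≤ 1 + 2 / C₁) →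
      (∀ t ∈ Ioi (0:ℝ), (2:ℝ) ^ (1 + 1 / (4 * C₂)) ≤ γ (2 * t) / γ t) →
      ∀ n : ℤ, n ≤ 0 → ∀ k : ℤ,
        ∑' j : ℤ, φ (deriv γ ((2:ℝ) ^ (-j)) / (2:ℝ) ^ (n + j - k)) ≤ C :=
  stmt8_general C₁ C₂
end

section
/- Suppose φ is real-valued and smooth on (a,b), with |φ'(x)| ≥ σ₁ > 0 and |φ''(x)| ≤ σ₂ for all x ∈ (a,b). Then |∫_a^b e^{iφ(t)} dt| ≤ 2/σ₁ + (b−a)·σ₂/σ₁². -/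
open Set MeasureTheory intervalIntegral

lemma vdc_core (a b σ₁ σ₂ : ℝ) (φ φ' φ'' : ℝ → ℝ)
    (hd1 : ∀ x ∈ Ioo a b, HasDerivAt φ (φ' x) x)
    (hd2 : ∀ x ∈ Ioo a b, HasDerivAt φ' (φ'' x) x)
    (hσ₁ : 0 < σ₁)
    (h1 : ∀ x ∈ Ioo a b, σ₁ ≤ |φ' x|)
    (h2 : ∀ x ∈ Ioo a b, |φ'' x| ≤ σ₂)
    (hφ'' : ContinuousOn φ'' (Ioo a b))
    (c d : ℝ) (hac : a < c) (hcd : c ≤ d) (hdb : d < b) :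
    ‖∫ t in c..d, Complex.exp (Complex.I * (φ t : ℂ))‖
      ≤ 2 / σ₁ + (d - c) * σ₂ / σ₁ ^ 2 := by
  have hsub : Icc c d ⊆ Ioo a b := fun x hx => ⟨lt_of_lt_of_le hac hx.1, lt_of_le_of_lt hx.2 hdb⟩
  have huIcc : uIcc c d = Icc c d := uIcc_of_le hcd
  have hne : ∀ x ∈ Ioo a b, (Complex.I * (φ' x : ℂ)) ≠ 0 := by
    intro x hx
    have : φ' x ≠ 0 := by
      intro h; have := h1 x hx; rw [h] at this; simp at this; linarith
    simp [Complex.ext_iff, this]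
  set u : ℝ → ℂ := fun x => (Complex.I * (φ' x : ℂ))⁻¹ with hu_def
  set u' : ℝ → ℂ := fun x => -(Complex.I * (φ'' x : ℂ)) / (Complex.I * (φ' x : ℂ)) ^ 2 with hu'_def
  set v : ℝ → ℂ := fun x => Complex.exp (Complex.I * (φ x : ℂ)) with hv_def
  set v' : ℝ → ℂ := fun x => Complex.I * (φ' x : ℂ) * Complex.exp (Complex.I * (φ x : ℂ)) with hv'_def
  have hφ'cont : ContinuousOn φ' (Ioo a b) := fun x hx =>
    ((hd2 x hx).differentiableAt.continuousAt).continuousWithinAt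
  have hφcont : ContinuousOn φ (Ioo a b) := fun x hx =>
    ((hd1 x hx).differentiableAt.continuousAt).continuousWithinAt
  -- derivatives
  have hu : ∀ x ∈ uIcc c d, HasDerivAt u (u' x) x := by
    intro x hx
    rw [huIcc] at hx
    have hx' := hsub hx
    have h : HasDerivAt (fun y => Complex.I * (φ' y : ℂ)) (Complex.I * (φ'' x : ℂ)) x :=
      ((hd2 x hx').ofReal_comp).const_mul Complex.I
    have hres := (hasDerivAt_inv (hne x hx')).comp x h
    have : u' x = -((Complex.I * (φ' x : ℂ)) ^ 2)⁻¹ * (Complex.I * (φ'' x : ℂ)) := by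
      simp only [hu'_def]; ring
    rw [this]
    exact hres
  have hv : ∀ x ∈ uIcc c d, HasDerivAt v (v' x) x := by
    intro x hx
    rw [huIcc] at hx
    have hx' := hsub hx
    have h : HasDerivAt (fun y => Complex.I * (φ y : ℂ)) (Complex.I * (φ' x : ℂ)) x :=
      ((hd1 x hx').ofReal_comp).const_mul Complex.I
    have hres := h.cexp
    simpa only [hv'_def, mul_comm] using hres
  -- integrability
  have hu'int : IntervalIntegrable u' volume c d := by
    apply ContinuousOn.intervalIntegrable
    rw [huIcc]
    apply ContinuousOn.div
    · exact (((Complex.continuous_ofReal.comp_continuousOn (hφ''.mono hsub)).const_smul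
        Complex.I).neg).congr (fun x hx => by simp [smul_eq_mul])
    · exact ((Complex.continuous_ofReal.comp_continuousOn (hφ'cont.mono hsub)).const_smul
        Complex.I).pow 2 |>.congr (fun x hx => by simp [smul_eq_mul])
    · intro x hx
      exact pow_ne_zero 2 (hne x (hsub hx))
  have hv'int : IntervalIntegrable v' volume c d := by
    apply ContinuousOn.intervalIntegrable
    rw [huIcc]
    have h1c : ContinuousOn (fun x => Complex.I * (φ' x : ℂ)) (Icc c d) :=
      ((Complex.continuous_ofReal.comp_continuousOn ((hφ'cont).mono hsub)).const_smul
        Complex.I).congr (fun x hx => by simp [smul_eq_mul])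
    have h2c : ContinuousOn (fun x => Complex.exp (Complex.I * (φ x : ℂ))) (Icc c d) := by
      apply Complex.continuous_exp.comp_continuousOn
      exact ((Complex.continuous_ofReal.comp_continuousOn ((hφcont).mono hsub)).const_smul
        Complex.I).congr (fun x hx => by simp [smul_eq_mul])
    exact h1c.mul h2c
  have hibp := intervalIntegral.integral_mul_deriv_eq_deriv_mul hu hv hu'int hv'int
  have huv : ∀ x ∈ Ioo a b, u x * v' x = v x := by
    intro x hx
    simp only [hu_def, hv_def, hv'_def]
    rw [← mul_assoc, inv_mul_cancel₀ (hne x hx), one_mul]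
  have hinteq : (∫ x in c..d, u x * v' x) = ∫ x in c..d, v x := by
    apply intervalIntegral.integral_congr
    intro x hx
    exact huv x (hsub (huIcc ▸ hx))
  rw [hinteq] at hibp
  -- norm bounds
  have hnu : ∀ x ∈ Ioo a b, ‖u x‖ ≤ 1 / σ₁ := by
    intro x hx
    simp only [hu_def, norm_inv, norm_mul, Complex.norm_I, one_mul, Complex.norm_real,
      Real.norm_eq_abs]
    rw [one_div]
    exact (inv_le_inv₀ (lt_of_lt_of_le hσ₁ (h1 x hx)) hσ₁).mpr (h1 x hx)
  have hnv : ∀ x, ‖v x‖ = 1 := by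
    intro x
    simp only [hv_def, Complex.norm_exp]
    norm_num
  have hσ₂ : 0 ≤ σ₂ := le_trans (abs_nonneg _) (h2 c (hsub ⟨le_refl c, hcd⟩))
  have hmid : ‖∫ x in c..d, u' x * v x‖ ≤ σ₂ / σ₁ ^ 2 * |d - c| := by
    apply intervalIntegral.norm_integral_le_of_norm_le_const
    intro x hx
    rw [uIoc_of_le hcd] at hx
    have hx' : x ∈ Ioo a b := hsub ⟨le_of_lt hx.1, hx.2⟩
    rw [norm_mul, hnv, mul_one]
    simp only [hu'_def]
    rw [norm_div, norm_neg, norm_mul, norm_pow, norm_mul]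
    simp only [Complex.norm_I, one_mul, Complex.norm_real, Real.norm_eq_abs]
    apply div_le_div₀ hσ₂ (h2 x hx') (by positivity)
    exact pow_le_pow_left₀ (le_of_lt hσ₁) (h1 x hx') 2
  rw [hibp]
  calc ‖u d * v d - u c * v c - ∫ x in c..d, u' x * v x‖
      ≤ ‖u d * v d - u c * v c‖ + ‖∫ x in c..d, u' x * v x‖ := norm_sub_le _ _
    _ ≤ (‖u d * v d‖ + ‖u c * v c‖) + σ₂ / σ₁ ^ 2 * |d - c| :=
        add_le_add (norm_sub_le _ _) hmid
    _ ≤ (1 / σ₁ + 1 / σ₁) + σ₂ / σ₁ ^ 2 * |d - c| := by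
        apply add_le_add ?_ le_rfl
        apply add_le_add
        · rw [norm_mul, hnv, mul_one]; exact hnu d (hsub ⟨hcd, le_refl d⟩)
        · rw [norm_mul, hnv, mul_one]; exact hnu c (hsub ⟨le_refl c, hcd⟩)
    _ = 2 / σ₁ + (d - c) * σ₂ / σ₁ ^ 2 := by
        rw [abs_of_nonneg (by linarith : (0:ℝ) ≤ d - c)]; ring

theorem stmt11 (a b σ₁ σ₂ : ℝ) (hab : a < b) (φ φ' φ'' : ℝ → ℝ)
    (hsmooth : ContDiffOn ℝ (⊤ : ℕ∞) φ (Ioo a b))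
    (hd1 : ∀ x ∈ Ioo a b, HasDerivAt φ (φ' x) x)
    (hd2 : ∀ x ∈ Ioo a b, HasDerivAt φ' (φ'' x) x)
    (hσ₁ : 0 < σ₁)
    (h1 : ∀ x ∈ Ioo a b, σ₁ ≤ |φ' x|)
    (h2 : ∀ x ∈ Ioo a b, |φ'' x| ≤ σ₂) :
    ‖∫ t in a..b, Complex.exp (Complex.I * (φ t : ℂ))‖
      ≤ 2 / σ₁ + (b - a) * σ₂ / σ₁ ^ 2 := by
  set f : ℝ → ℂ := fun t => Complex.exp (Complex.I * (φ t : ℂ)) with hf_def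
  have hmemmid : (a + b) / 2 ∈ Ioo a b := ⟨by linarith, by linarith⟩
  have hσ₂ : 0 ≤ σ₂ := le_trans (abs_nonneg _) (h2 _ hmemmid)
  -- continuity of φ''
  have hev : ∀ x ∈ Ioo a b, deriv φ =ᶠ[nhds x] φ' := by
    intro x hx
    filter_upwards [isOpen_Ioo.mem_nhds hx] with y hy
    exact (hd1 y hy).deriv
  have hd2' : ∀ x ∈ Ioo a b, HasDerivAt (deriv φ) (φ'' x) x := by
    intro x hx
    exact (hd2 x hx).congr_of_eventuallyEq (hev x hx)
  have hcd2 : ContDiffOn ℝ 1 (deriv φ) (Ioo a b) :=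
    hsmooth.deriv_of_isOpen isOpen_Ioo (WithTop.coe_le_coe.mpr le_top)
  have hc2 : ContinuousOn (deriv (deriv φ)) (Ioo a b) :=
    hcd2.continuousOn_deriv_of_isOpen isOpen_Ioo le_rfl
  have hφ'' : ContinuousOn φ'' (Ioo a b) :=
    hc2.congr (fun x hx => ((hd2' x hx).deriv).symm)
  -- norm of f is 1
  have hnf : ∀ x, ‖f x‖ = 1 := by
    intro x
    simp only [hf_def, Complex.norm_exp]
    norm_num
  -- interval integrability of f on [a, b]
  have hφcont : ContinuousOn φ (Ioo a b) := hsmooth.continuousOn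
  have hfcont : ContinuousOn f (Ioo a b) := by
    apply Complex.continuous_exp.comp_continuousOn
    exact ((Complex.continuous_ofReal.comp_continuousOn hφcont).const_smul
      Complex.I).congr (fun x hx => by simp [smul_eq_mul])
  have hrestr : volume.restrict (Ioo a b) = volume.restrict (Ioc a b) :=
    Measure.restrict_congr_set Ioo_ae_eq_Ioc
  have hmeas : AEStronglyMeasurable f (volume.restrict (Ioc a b)) := by
    rw [← hrestr]
    exact hfcont.aestronglyMeasurable measurableSet_Ioo
  have hint : IntervalIntegrable f volume a b := by
    rw [intervalIntegrable_iff_integrableOn_Ioc_of_le (le_of_lt hab)]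
    refine ⟨hmeas, ?_⟩
    apply HasFiniteIntegral.of_bounded (C := 1)
    filter_upwards with x
    rw [hnf]
  -- limiting argument
  apply le_of_forall_pos_le_add
  intro ε hε
  set δ : ℝ := min (ε / 2) ((b - a) / 3) with hδ_def
  have hδpos : 0 < δ := lt_min (by linarith) (by linarith)
  have hδε : δ ≤ ε / 2 := min_le_left _ _
  have hδb : δ ≤ (b - a) / 3 := min_le_right _ _
  set c : ℝ := a + δ with hc_def
  set d : ℝ := b - δ with hd_def
  have hac : a < c := by simp only [hc_def]; linarith
  have hcd : c ≤ d := by simp only [hc_def, hd_def]; linarith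
  have hdb : d < b := by simp only [hd_def]; linarith
  have hi1 : IntervalIntegrable f volume a c := by
    apply hint.mono_set
    rw [uIcc_of_le (le_of_lt hac), uIcc_of_le (le_of_lt hab)]
    exact Icc_subset_Icc le_rfl (by linarith)
  have hi2 : IntervalIntegrable f volume c d := by
    apply hint.mono_set
    rw [uIcc_of_le hcd, uIcc_of_le (le_of_lt hab)]
    exact Icc_subset_Icc (le_of_lt hac) (le_of_lt hdb)
  have hi3 : IntervalIntegrable f volume d b := by
    apply hint.mono_set
    rw [uIcc_of_le (le_of_lt hdb), uIcc_of_le (le_of_lt hab)]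
    exact Icc_subset_Icc (by linarith) le_rfl
  have hsplit : (∫ t in a..b, f t) =
      (∫ t in a..c, f t) + (∫ t in c..d, f t) + ∫ t in d..b, f t := by
    rw [intervalIntegral.integral_add_adjacent_intervals hi1 hi2,
      intervalIntegral.integral_add_adjacent_intervals (hi1.trans hi2) hi3]
  have hb1 : ‖∫ t in a..c, f t‖ ≤ δ := by
    have := intervalIntegral.norm_integral_le_of_norm_le_const
      (C := 1) (f := f) (a := a) (b := c) (fun x _ => le_of_eq (hnf x))
    rw [one_mul, abs_of_nonneg (by linarith : (0:ℝ) ≤ c - a)] at this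
    simpa only [hc_def, add_sub_cancel_left] using this
  have hb3 : ‖∫ t in d..b, f t‖ ≤ δ := by
    have := intervalIntegral.norm_integral_le_of_norm_le_const
      (C := 1) (f := f) (a := d) (b := b) (fun x _ => le_of_eq (hnf x))
    rw [one_mul, abs_of_nonneg (by linarith : (0:ℝ) ≤ b - d)] at this
    simpa only [hd_def, sub_sub_cancel] using this
  have hb2 : ‖∫ t in c..d, f t‖ ≤ 2 / σ₁ + (d - c) * σ₂ / σ₁ ^ 2 :=
    vdc_core a b σ₁ σ₂ φ φ' φ'' hd1 hd2 hσ₁ h1 h2 hφ'' c d hac hcd hdb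
  have hdc : (d - c) * σ₂ / σ₁ ^ 2 ≤ (b - a) * σ₂ / σ₁ ^ 2 := by
    have h : d - c ≤ b - a := by simp only [hc_def, hd_def]; linarith
    gcongr
  calc ‖∫ t in a..b, f t‖
      ≤ ‖∫ t in a..c, f t‖ + ‖∫ t in c..d, f t‖ + ‖∫ t in d..b, f t‖ := by
        rw [hsplit]; exact le_trans (norm_add_le _ _) (by gcongr; exact norm_add_le _ _)
    _ ≤ δ + (2 / σ₁ + (d - c) * σ₂ / σ₁ ^ 2) + δ := by
        exact add_le_add (add_le_add hb1 hb2) hb3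
    _ ≤ 2 / σ₁ + (b - a) * σ₂ / σ₁ ^ 2 + ε := by linarith
end

section
/- Let δ_{j,K}(a,b) = (1 + 2^{j+m}|a−b|)^{−K}. Let I₁, I₂ be two intervals from a Whitney decomposition of an open set Ω (so |I| ≤ dist(I, Ωᶜ) ≤ 4|I| for each), with a ∈ I₁, b ∈ I₂, and suppose dist(I₁,I₂) ≥ 100·min{|I₁|,|I₂|}. Then δ_{j,K}(a,b) ≲ δ_{j,K/2}(a, Ωᶜ) · δ_{j,K/2}(b, Ωᶜ), where δ_{j,K/2}(x,E) = (1 + 2^{j+m} dist(x,E))^{−K/2} and the implied constant is absolute. -/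
open Set

/-- The (inf) distance between two subsets of `ℝ`. -/
noncomputable def setDist (s t : Set ℝ) : ℝ := sInf (Set.image2 dist s t)

theorem stmt13 :
    ∃ C > (0:ℝ), ∀ (Ω : Set ℝ), IsOpen Ω →
      ∀ a₁ b₁ a₂ b₂ : ℝ, a₁ < b₁ → a₂ < b₂ →
      Icc a₁ b₁ ⊆ Ω → Icc a₂ b₂ ⊆ Ω →
      b₁ - a₁ ≤ setDist (Icc a₁ b₁) Ωᶜ → setDist (Icc a₁ b₁) Ωᶜ ≤ 4 * (b₁ - a₁) →
      b₂ - a₂ ≤ setDist (Icc a₂ b₂) Ωᶜ → setDist (Icc a₂ b₂) Ωᶜ ≤ 4 * (b₂ - a₂) →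
      100 * min (b₁ - a₁) (b₂ - a₂) ≤ setDist (Icc a₁ b₁) (Icc a₂ b₂) →
      ∀ (j : ℤ) (m : ℕ) (K : ℝ), 0 < K →
      ∀ a ∈ Icc a₁ b₁, ∀ b ∈ Icc a₂ b₂,
        (1 + (2:ℝ) ^ (j + (m:ℤ)) * |a - b|) ^ (-K) ≤
          C * ((1 + (2:ℝ) ^ (j + (m:ℤ)) * Metric.infDist a Ωᶜ) ^ (-(K / 2)) *
               (1 + (2:ℝ) ^ (j + (m:ℤ)) * Metric.infDist b Ωᶜ) ^ (-(K / 2))) := by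
  refine ⟨1, one_pos, ?_⟩
  intro Ω hΩ a₁ b₁ a₂ b₂ hab1 hab2 hsub1 hsub2 hw1 hw1' hw2 hw2' hsep j m K hK a ha b hb
  have hne : Ωᶜ.Nonempty := by
    rcases Set.eq_empty_or_nonempty Ωᶜ with h | h
    · exfalso
      have : setDist (Icc a₁ b₁) Ωᶜ = 0 := by simp [setDist, h]
      linarith
    · exact h
  set t : ℝ := (2:ℝ) ^ (j + (m:ℤ)) with ht_def
  have ht : 0 < t := zpow_pos (by norm_num) _
  set dA := Metric.infDist a Ωᶜ with hdA_def
  set dB := Metric.infDist b Ωᶜ with hdB_def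
  have hdA0 : 0 ≤ dA := Metric.infDist_nonneg
  have hdB0 : 0 ≤ dB := Metric.infDist_nonneg
  set D := dist a b with hD_def
  have hD0 : 0 ≤ D := dist_nonneg
  have bound : ∀ (x a' b' : ℝ), x ∈ Icc a' b' →
      Metric.infDist x Ωᶜ ≤ setDist (Icc a' b') Ωᶜ + (b' - a') := by
    intro x a' b' hx
    have hne2 : (Set.image2 dist (Icc a' b') Ωᶜ).Nonempty :=
      Set.Nonempty.image2 ⟨x, hx⟩ hne
    have h : Metric.infDist x Ωᶜ - (b' - a') ≤ setDist (Icc a' b') Ωᶜ := by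
      apply le_csInf hne2
      rintro z ⟨u, hu, y, hy, rfl⟩
      have h1 : Metric.infDist x Ωᶜ ≤ dist x y := Metric.infDist_le_dist_of_mem hy
      have h2 : dist x y ≤ dist x u + dist u y := dist_triangle _ _ _
      have h3 : dist x u ≤ b' - a' := Real.dist_le_of_mem_Icc hx hu
      linarith
    linarith
  have hdA : dA ≤ 5 * (b₁ - a₁) := by
    have := bound a a₁ b₁ ha; linarith
  have hdB : dB ≤ 5 * (b₂ - a₂) := by
    have := bound b a₂ b₂ hb; linarith
  have hsepD : setDist (Icc a₁ b₁) (Icc a₂ b₂) ≤ D := by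
    apply csInf_le
    · exact ⟨0, by rintro z ⟨u, _, v, _, rfl⟩; exact dist_nonneg⟩
    · exact Set.mem_image2_of_mem ha hb
  have hmin : 100 * min (b₁ - a₁) (b₂ - a₂) ≤ D := le_trans hsep hsepD
  have hBA : dA ≤ dB + D := Metric.infDist_le_infDist_add_dist
  have hAB : dB ≤ dA + D := by
    have := Metric.infDist_le_infDist_add_dist (x := b) (y := a) (s := Ωᶜ)
    rwa [dist_comm] at this
  have key : (1 + t * dA) * (1 + t * dB) ≤ (1 + t * D) ^ 2 := by
    rcases le_total (b₁ - a₁) (b₂ - a₂) with h | h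
    · rw [min_eq_left h] at hmin
      have hA : dA ≤ D / 20 := by linarith
      have hB : dB ≤ 21 / 20 * D := by linarith
      nlinarith [mul_le_mul (mul_le_mul_of_nonneg_left hA ht.le)
          (mul_le_mul_of_nonneg_left hB ht.le) (mul_nonneg ht.le hdB0)
          (by positivity : (0:ℝ) ≤ t * (D / 20)),
        mul_nonneg ht.le hdA0, mul_nonneg ht.le hdB0, mul_nonneg ht.le hD0,
        sq_nonneg (t * D)]
    · rw [min_eq_right h] at hmin
      have hB : dB ≤ D / 20 := by linarith
      have hA : dA ≤ 21 / 20 * D := by linarith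
      nlinarith [mul_le_mul (mul_le_mul_of_nonneg_left hA ht.le)
          (mul_le_mul_of_nonneg_left hB ht.le) (mul_nonneg ht.le hdB0)
          (by positivity : (0:ℝ) ≤ t * (21 / 20 * D)),
        mul_nonneg ht.le hdA0, mul_nonneg ht.le hdB0, mul_nonneg ht.le hD0,
        sq_nonneg (t * D)]
  have h1 : (0:ℝ) < 1 + t * dA := by nlinarith [mul_nonneg ht.le hdA0]
  have h2 : (0:ℝ) < 1 + t * dB := by nlinarith [mul_nonneg ht.le hdB0]
  have h3 : (0:ℝ) < 1 + t * D := by nlinarith [mul_nonneg ht.le hD0]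
  have habs : |a - b| = D := (Real.dist_eq a b).symm
  rw [habs, one_mul, ← Real.mul_rpow h1.le h2.le]
  have e : (1 + t * D) ^ (-K) = ((1 + t * D) ^ 2) ^ (-(K / 2)) := by
    rw [← Real.rpow_natCast (1 + t * D) 2, ← Real.rpow_mul h3.le]
    norm_num
    congr 1
    ring
  rw [e]
  exact Real.rpow_le_rpow_of_nonpos (mul_pos h1 h2) key (by linarith)
end
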